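/- For every bunch Δ, the composite of the nestifying translation followed by the bunching translation returns a bunch coherently equivalent to the original: β(η(Δ)) ≡ Δ. -/
import Mathlib


namespace BIPaper

/-- Formulas of BI: `φ ::= ⊤ | ⊥ | I | A | φ∧φ | φ∨φ | φ→φ | φ∗φ | φ−∗φ`. -/
inductive Formula : Type where
  | atom (a : ℕ)
  | top
  | bot
  | unit
  | and (φ ψ : Formula)
  | or (φ ψ : Formula)
  | imp (φ ψ : Formula)
  | star (φ ψ : Formula)
  | wand (φ ψ : Formula)
/-- Bunches: `Δ ::= φ | ∅₊ | ∅ₓ | (Δ;Δ) | (Δ,Δ)`. -/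
inductive Bunch : Type where
  | frm (φ : Formula)
  | eplus
  | etimes
  | semi (Δ₁ Δ₂ : Bunch)
  | comma (Δ₁ Δ₂ : Bunch)

/-- Bunched contexts `Δ(·)`: a bunch with a hole, used for sub-bunch replacement. -/
inductive BCtx : Type where
  | hole
  | semiL (C : BCtx) (Δ : Bunch)
  | semiR (Δ : Bunch) (C : BCtx)
  | commaL (C : BCtx) (Δ : Bunch)
  | commaR (Δ : Bunch) (C : BCtx)

/-- Filling the hole of a bunched context. -/
def BCtx.fill : BCtx → Bunch → Bunch
  | .hole, Δ => Δ
  | .semiL C Δ', Δ => .semi (C.fill Δ) Δ'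
  | .semiR Δ' C, Δ => .semi Δ' (C.fill Δ)
  | .commaL C Δ', Δ => .comma (C.fill Δ) Δ'
  | .commaR Δ' C, Δ => .comma Δ' (C.fill Δ)

/-- Coherent equivalence `≡` of bunches: least congruence making
`(; , ∅₊)` and `(, , ∅ₓ)` commutative monoids. -/
inductive BEquiv : Bunch → Bunch → Prop where
  | refl (Δ) : BEquiv Δ Δ
  | symm : BEquiv Δ Δ' → BEquiv Δ' Δ
  | trans : BEquiv Δ₁ Δ₂ → BEquiv Δ₂ Δ₃ → BEquiv Δ₁ Δ₃
  | semiComm (Δ₁ Δ₂) : BEquiv (.semi Δ₁ Δ₂) (.semi Δ₂ Δ₁)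
  | semiAssoc (Δ₁ Δ₂ Δ₃) : BEquiv (.semi (.semi Δ₁ Δ₂) Δ₃) (.semi Δ₁ (.semi Δ₂ Δ₃))
  | semiUnit (Δ) : BEquiv (.semi Δ .eplus) Δ
  | commaComm (Δ₁ Δ₂) : BEquiv (.comma Δ₁ Δ₂) (.comma Δ₂ Δ₁)
  | commaAssoc (Δ₁ Δ₂ Δ₃) : BEquiv (.comma (.comma Δ₁ Δ₂) Δ₃) (.comma Δ₁ (.comma Δ₂ Δ₃))
  | commaUnit (Δ) : BEquiv (.comma Δ .etimes) Δ
  | congr (C : BCtx) : BEquiv Δ Δ' → BEquiv (C.fill Δ) (C.fill Δ')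

/-- The bunched sequent calculus LBI.  `LBI b g Δ φ` means the sequent `Δ ⊢ φ`
is derivable, where the flag `b` permits the `cut` rule (so `LBI true true` is
full LBI and `LBI false true` is cut-free LBI), and the flag `g` permits the
general axiom `Ax : φ ⊢ φ` (the atomic axiom is always available; taking
`g := false` restricts `Ax` to propositional letters). -/
inductive LBI : Bool → Bool → Bunch → Formula → Prop where
  | ax (φ) : LBI b true (.frm φ) φ
  | axAtom (a : ℕ) : LBI b g (.frm (.atom a)) (.atom a)
  | exch : LBI b g Δ φ → BEquiv Δ Δ' → LBI b g Δ' φ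
  | weak (C : BCtx) (Δ'') : LBI b g (C.fill Δ') φ → LBI b g (C.fill (.semi Δ' Δ'')) φ
  | contr (C : BCtx) : LBI b g (C.fill (.semi Δ' Δ')) φ → LBI b g (C.fill Δ') φ
  | botL (C : BCtx) (φ) : LBI b g (C.fill (.frm .bot)) φ
  | topR : LBI b g .eplus .top
  | unitR : LBI b g .etimes .unit
  | unitL (C : BCtx) : LBI b g (C.fill .etimes) φ → LBI b g (C.fill (.frm .unit)) φ
  | andL (C : BCtx) : LBI b g (C.fill (.semi (.frm φ) (.frm ψ))) χ →
      LBI b g (C.fill (.frm (.and φ ψ))) χ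
  | andR : LBI b g Γ φ → LBI b g Δ ψ → LBI b g (.semi Γ Δ) (.and φ ψ)
  | orL (C : BCtx) : LBI b g (C.fill (.frm φ)) χ → LBI b g (C.fill (.frm ψ)) χ →
      LBI b g (C.fill (.frm (.or φ ψ))) χ
  | orR1 : LBI b g Δ φ → LBI b g Δ (.or φ ψ)
  | orR2 : LBI b g Δ ψ → LBI b g Δ (.or φ ψ)
  | impL (C : BCtx) : LBI b g Γ φ → LBI b g (C.fill (.frm ψ)) χ →
      LBI b g (C.fill (.semi Γ (.frm (.imp φ ψ)))) χ
  | impR : LBI b g (.semi Δ (.frm φ)) ψ → LBI b g Δ (.imp φ ψ)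
  | starL (C : BCtx) : LBI b g (C.fill (.comma (.frm φ) (.frm ψ))) χ →
      LBI b g (C.fill (.frm (.star φ ψ))) χ
  | starR : LBI b g Γ φ → LBI b g Δ ψ → LBI b g (.comma Γ Δ) (.star φ ψ)
  | wandL (C : BCtx) : LBI b g Γ φ → LBI b g (C.fill (.frm ψ)) χ →
      LBI b g (C.fill (.comma Γ (.frm (.wand φ ψ)))) χ
  | wandR : LBI b g (.comma Δ (.frm φ)) ψ → LBI b g Δ (.wand φ ψ)
  | cut (C : BCtx) : LBI true g Γ φ → LBI true g (C.fill (.frm φ)) χ →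
      LBI true g (C.fill Γ) χ
/-- Two-sorted nests (with leaves of type `α`), represented as finite-branching
trees whose `plus`/`times` nodes carry lists; lists are regarded as multisets
via the equivalence `NestEq` below, which plays the role of equality of
two-sorted nested multisets. -/
inductive Nest (α : Type) : Type where
  | frm (a : α)
  | plus (l : List (Nest α))
  | times (l : List (Nest α))

variable {α β : Type}

def Nest.flatP : Nest α → List (Nest α)
  | .plus l => l
  | x => [x]

def Nest.flatT : Nest α → List (Nest α)
  | .times l => l
  | x => [x]

/-- Smart additive multiset constructor: merges additive children into the
ambient additive multiset and promotes singletons. -/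
def nplus (l : List (Nest α)) : Nest α :=
  match l.flatMap Nest.flatP with
  | [x] => x
  | l' => .plus l'

/-- Smart multiplicative multiset constructor. -/
def ntimes (l : List (Nest α)) : Nest α :=
  match l.flatMap Nest.flatT with
  | [x] => x
  | l' => .times l'

/-- Nested contexts `Γ{·}`: a nest with a hole inside one of its multisets
(or at the root). -/
inductive NCtx (α : Type) : Type where
  | hole
  | plus (l : List (Nest α)) (C : NCtx α)
  | times (l : List (Nest α)) (C : NCtx α)

/-- Filling the hole of a nested context (with the implicit merging and
promotion in the syntax tree). -/
def NCtx.fill : NCtx α → Nest α → Nest α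
  | .hole, x => x
  | .plus l C, x => nplus (C.fill x :: l)
  | .times l C, x => ntimes (C.fill x :: l)

mutual
/-- Equality of nests qua nested multisets: the lists in the two nests agree
up to permutation, recursively. -/
inductive NestEq : Nest α → Nest α → Prop where
  | frm (a : α) : NestEq (.frm a) (.frm a)
  | plus : NListPerm l l' → NestEq (.plus l) (.plus l')
  | times : NListPerm l l' → NestEq (.times l) (.times l')

inductive NListPerm : List (Nest α) → List (Nest α) → Prop where
  | nil : NListPerm [] []
  | cons : NestEq x y → NListPerm l l' → NListPerm (x :: l) (y :: l')
  | swap : NestEq x x' → NestEq y y' → NListPerm l l' →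
      NListPerm (x :: y :: l) (y' :: x' :: l')
  | trans : NListPerm l₁ l₂ → NListPerm l₂ l₃ → NListPerm l₁ l₃
end

/-- All leaves of a nest satisfy `p`. -/
inductive Nest.All (p : α → Prop) : Nest α → Prop where
  | frm : p a → Nest.All p (.frm a)
  | plus : (∀ x ∈ l, Nest.All p x) → Nest.All p (.plus l)
  | times : (∀ x ∈ l, Nest.All p x) → Nest.All p (.times l)

def Nest.notPlusRoot : Nest α → Prop
  | .plus _ => False
  | _ => True

def Nest.notTimesRoot : Nest α → Prop
  | .times _ => False
  | _ => True

/-- Well-formedness of a nest according to the two-sorted grammar: multisets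
are never singletons, and additive (resp. multiplicative) multisets contain
only formulas and multiplicative (resp. additive) nests. -/
inductive Nest.WF : Nest α → Prop where
  | frm (a : α) : Nest.WF (.frm a)
  | plus : l.length ≠ 1 → (∀ x ∈ l, Nest.WF x) → (∀ x ∈ l, Nest.notPlusRoot x) →
      Nest.WF (.plus l)
  | times : l.length ≠ 1 → (∀ x ∈ l, Nest.WF x) → (∀ x ∈ l, Nest.notTimesRoot x) →
      Nest.WF (.times l)

mutual
/-- Leafwise map of nests. -/
def Nest.map (f : α → β) : Nest α → Nest β
  | .frm a => .frm (f a)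
  | .plus l => .plus (Nest.mapList f l)
  | .times l => .times (Nest.mapList f l)

def Nest.mapList (f : α → β) : List (Nest α) → List (Nest β)
  | [] => []
  | x :: xs => Nest.map f x :: Nest.mapList f xs
end
mutual
/-- The top-level additive components of the nestification of a bunch. -/
def addParts : Bunch → List (Nest Formula)
  | .frm φ => [.frm φ]
  | .eplus => []
  | .etimes => [.times []]
  | .semi Δ₁ Δ₂ => addParts Δ₁ ++ addParts Δ₂
  | .comma Δ₁ Δ₂ => [ntimes (mulParts Δ₁ ++ mulParts Δ₂)]

/-- The top-level multiplicative components of the nestification of a bunch. -/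
def mulParts : Bunch → List (Nest Formula)
  | .frm φ => [.frm φ]
  | .etimes => []
  | .eplus => [.plus []]
  | .comma Δ₁ Δ₂ => mulParts Δ₁ ++ mulParts Δ₂
  | .semi Δ₁ Δ₂ => [nplus (addParts Δ₁ ++ addParts Δ₂)]
end

/-- The nestifying translation `η : B → N`. -/
def eta : Bunch → Nest Formula
  | .frm φ => .frm φ
  | .eplus => .plus []
  | .etimes => .times []
  | .semi Δ₁ Δ₂ => nplus (addParts Δ₁ ++ addParts Δ₂)
  | .comma Δ₁ Δ₂ => ntimes (mulParts Δ₁ ++ mulParts Δ₂)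

mutual
/-- The bunching translation `β : N → B`. -/
def beta : Nest Formula → Bunch
  | .frm φ => .frm φ
  | .plus l => betaP l
  | .times l => betaT l

def betaP : List (Nest Formula) → Bunch
  | [] => .eplus
  | [x] => beta x
  | x :: xs => .semi (beta x) (betaP xs)

def betaT : List (Nest Formula) → Bunch
  | [] => .etimes
  | [x] => beta x
  | x :: xs => .comma (beta x) (betaT xs)
end

theorem BEquiv.semiCongr {a a' b b' : Bunch} (h1 : BEquiv a a') (h2 : BEquiv b b') :
    BEquiv (.semi a b) (.semi a' b') :=
  .trans (.congr (.semiL .hole b) h1) (.congr (.semiR a' .hole) h2)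

theorem BEquiv.commaCongr {a a' b b' : Bunch} (h1 : BEquiv a a') (h2 : BEquiv b b') :
    BEquiv (.comma a b) (.comma a' b') :=
  .trans (.congr (.commaL .hole b) h1) (.congr (.commaR a' .hole) h2)

theorem betaP_cons (x : Nest Formula) (t : List (Nest Formula)) :
    BEquiv (betaP (x :: t)) (.semi (beta x) (betaP t)) := by
  cases t with
  | nil => exact .symm (.semiUnit _)
  | cons y ys => exact .refl _

theorem betaT_cons (x : Nest Formula) (t : List (Nest Formula)) :
    BEquiv (betaT (x :: t)) (.comma (beta x) (betaT t)) := by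
  cases t with
  | nil => exact .symm (.commaUnit _)
  | cons y ys => exact .refl _

theorem betaP_append (l1 l2 : List (Nest Formula)) :
    BEquiv (betaP (l1 ++ l2)) (.semi (betaP l1) (betaP l2)) := by
  induction l1 with
  | nil =>
    exact .symm (.trans (.semiComm _ _) (.semiUnit _))
  | cons x xs ih =>
    refine .trans (betaP_cons x (xs ++ l2)) ?_
    refine .trans (BEquiv.semiCongr (.refl _) ih) ?_
    refine .trans (.symm (.semiAssoc _ _ _)) ?_
    exact BEquiv.semiCongr (.symm (betaP_cons x xs)) (.refl _)

theorem betaT_append (l1 l2 : List (Nest Formula)) :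
    BEquiv (betaT (l1 ++ l2)) (.comma (betaT l1) (betaT l2)) := by
  induction l1 with
  | nil =>
    exact .symm (.trans (.commaComm _ _) (.commaUnit _))
  | cons x xs ih =>
    refine .trans (betaT_cons x (xs ++ l2)) ?_
    refine .trans (BEquiv.commaCongr (.refl _) ih) ?_
    refine .trans (.symm (.commaAssoc _ _ _)) ?_
    exact BEquiv.commaCongr (.symm (betaT_cons x xs)) (.refl _)

theorem betaP_flatP (x : Nest Formula) : BEquiv (betaP x.flatP) (beta x) := by
  cases x with
  | frm a => exact .refl _
  | plus l => exact .refl _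
  | times l => exact .refl _

theorem betaT_flatT (x : Nest Formula) : BEquiv (betaT x.flatT) (beta x) := by
  cases x with
  | frm a => exact .refl _
  | plus l => exact .refl _
  | times l => exact .refl _

theorem betaP_flatMap (l : List (Nest Formula)) :
    BEquiv (betaP (l.flatMap Nest.flatP)) (betaP l) := by
  induction l with
  | nil => exact .refl _
  | cons x xs ih =>
    rw [List.flatMap_cons]
    refine .trans (betaP_append _ _) ?_
    refine .trans (BEquiv.semiCongr (betaP_flatP x) ih) ?_
    exact .symm (betaP_cons x xs)

theorem betaT_flatMap (l : List (Nest Formula)) :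
    BEquiv (betaT (l.flatMap Nest.flatT)) (betaT l) := by
  induction l with
  | nil => exact .refl _
  | cons x xs ih =>
    rw [List.flatMap_cons]
    refine .trans (betaT_append _ _) ?_
    refine .trans (BEquiv.commaCongr (betaT_flatT x) ih) ?_
    exact .symm (betaT_cons x xs)

theorem beta_nplus (l : List (Nest Formula)) :
    beta (nplus l) = betaP (l.flatMap Nest.flatP) := by
  unfold nplus
  cases h : l.flatMap Nest.flatP with
  | nil => rfl
  | cons x xs => cases xs <;> rfl

theorem beta_ntimes (l : List (Nest Formula)) :
    beta (ntimes l) = betaT (l.flatMap Nest.flatT) := by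
  unfold ntimes
  cases h : l.flatMap Nest.flatT with
  | nil => rfl
  | cons x xs => cases xs <;> rfl

mutual
theorem addParts_equiv (Δ : Bunch) : BEquiv (betaP (addParts Δ)) Δ := by
  cases Δ with
  | frm φ => exact .refl _
  | eplus => exact .refl _
  | etimes => exact .refl _
  | semi Δ₁ Δ₂ =>
    refine .trans (betaP_append _ _) ?_
    exact BEquiv.semiCongr (addParts_equiv Δ₁) (addParts_equiv Δ₂)
  | comma Δ₁ Δ₂ =>
    show BEquiv (beta (ntimes (mulParts Δ₁ ++ mulParts Δ₂))) _
    rw [beta_ntimes]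
    refine .trans (betaT_flatMap _) ?_
    refine .trans (betaT_append _ _) ?_
    exact BEquiv.commaCongr (mulParts_equiv Δ₁) (mulParts_equiv Δ₂)

theorem mulParts_equiv (Δ : Bunch) : BEquiv (betaT (mulParts Δ)) Δ := by
  cases Δ with
  | frm φ => exact .refl _
  | eplus => exact .refl _
  | etimes => exact .refl _
  | comma Δ₁ Δ₂ =>
    refine .trans (betaT_append _ _) ?_
    exact BEquiv.commaCongr (mulParts_equiv Δ₁) (mulParts_equiv Δ₂)
  | semi Δ₁ Δ₂ =>
    show BEquiv (beta (nplus (addParts Δ₁ ++ addParts Δ₂))) _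
    rw [beta_nplus]
    refine .trans (betaP_flatMap _) ?_
    refine .trans (betaP_append _ _) ?_
    exact BEquiv.semiCongr (addParts_equiv Δ₁) (addParts_equiv Δ₂)
end

/-- **Lemma 7.1**: for every bunch `Δ`, bunching its nestification returns a
bunch coherently equivalent to the original: `β(η(Δ)) ≡ Δ`. -/
theorem beta_eta_equiv (Δ : Bunch) : BEquiv (beta (eta Δ)) Δ := by
  cases Δ with
  | frm φ => exact .refl _
  | eplus => exact .refl _
  | etimes => exact .refl _
  | semi Δ₁ Δ₂ =>
    show BEquiv (beta (nplus (addParts Δ₁ ++ addParts Δ₂))) _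
    rw [beta_nplus]
    refine .trans (betaP_flatMap _) ?_
    refine .trans (betaP_append _ _) ?_
    exact BEquiv.semiCongr (addParts_equiv Δ₁) (addParts_equiv Δ₂)
  | comma Δ₁ Δ₂ =>
    show BEquiv (beta (ntimes (mulParts Δ₁ ++ mulParts Δ₂))) _
    rw [beta_ntimes]
    refine .trans (betaT_flatMap _) ?_
    refine .trans (betaT_append _ _) ?_
    exact BEquiv.commaCongr (mulParts_equiv Δ₁) (mulParts_equiv Δ₂)

end BIPaper
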